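/- arXiv:1307.5890 — 5 statements merged into one kernel-verified Lean document; each statement's English description precedes it below -/
import Mathlib

section
/- (i) For q = exp(πi/18) ∈ ℂ, one has q⁵ + q^{−5} = 2·sin(2π/9). (ii) Every nonzero complex number σ satisfying σ + σ^{−1} = 2·sin(2π/9) satisfies σ⁸ ≠ 1; in particular σ² is not a fourth root of unity. -/
/-!
Part (i) is `q⁵ + q⁻⁵ = 2 cos(5π/18) = 2 sin(π/2 - 5π/18)`. For part (ii), put `x = σ + σ⁻¹`;
the identity `x² (x² - 4) (x² - 2)² σ⁸ = (σ⁸ - 1)²` shows that an eighth root of unity has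
`x² ∈ {0, 2, 4}`, whereas `x² = 4 sin²(2π/9)` lies strictly between `0` and `4 sin²(π/4) = 2`.
-/

open Complex in
theorem Complex.exp_zpow_add_exp_zpow_neg (z : ℂ) (n : ℤ) :
    exp z ^ n + exp z ^ (-n) = 2 * cosh (n * z) := by
  rw [← exp_int_mul, ← exp_int_mul, cosh]
  push_cast
  ring_nf

theorem add_inv_sq_mul_sub_four_mul_sub_two_sq {K : Type*} [Field K] {σ : K} (hσ : σ ≠ 0) :
    (σ + σ⁻¹) ^ 2 * ((σ + σ⁻¹) ^ 2 - 4) * ((σ + σ⁻¹) ^ 2 - 2) ^ 2 * σ ^ 8 = (σ ^ 8 - 1) ^ 2 := by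
  field_simp
  ring

theorem add_inv_sq_eq_zero_or_two_or_four_of_pow_eight_eq_one {K : Type*} [Field K] {σ : K}
    (h8 : σ ^ 8 = 1) : (σ + σ⁻¹) ^ 2 = 0 ∨ (σ + σ⁻¹) ^ 2 = 2 ∨ (σ + σ⁻¹) ^ 2 = 4 := by
  have hσ : σ ≠ 0 := by rintro rfl; simp at h8
  have h := add_inv_sq_mul_sub_four_mul_sub_two_sq hσ
  rw [h8, sub_self, mul_one, zero_pow two_ne_zero] at h
  rcases mul_eq_zero.1 h with h | h
  · rcases mul_eq_zero.1 h with h | h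
    · exact .inl h
    · exact .inr (.inr (sub_eq_zero.1 h))
  · exact .inr (.inl (sub_eq_zero.1 (pow_eq_zero_iff two_ne_zero |>.1 h)))

theorem Real.sin_two_pi_div_nine_pos : 0 < Real.sin (2 * Real.pi / 9) :=
  Real.sin_pos_of_pos_of_lt_pi (by positivity) (by linarith [Real.pi_pos])

theorem Real.sin_two_pi_div_nine_sq_lt_half : Real.sin (2 * Real.pi / 9) ^ 2 < 1 / 2 := by
  have hlt : Real.sin (2 * Real.pi / 9) < Real.sin (Real.pi / 4) :=
    Real.sin_lt_sin_of_lt_of_le_pi_div_two (by linarith [Real.pi_pos])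
      (by linarith [Real.pi_pos]) (by linarith [Real.pi_pos])
  have hsqrt : (√2 / 2) ^ 2 = 1 / 2 := by rw [div_pow, Real.sq_sqrt zero_le_two]; norm_num
  rw [Real.sin_pi_div_four] at hlt
  nlinarith [Real.sin_two_pi_div_nine_pos]

theorem stmt_7 :
    (Complex.exp ((Real.pi : ℂ) * Complex.I / 18) ^ (5 : ℤ) +
      Complex.exp ((Real.pi : ℂ) * Complex.I / 18) ^ (-5 : ℤ) =
      (2 * Real.sin (2 * Real.pi / 9) : ℝ)) ∧
    (∀ σ : ℂ, σ ≠ 0 → σ + σ⁻¹ = (2 * Real.sin (2 * Real.pi / 9) : ℝ) →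
      σ ^ 8 ≠ 1 ∧ (σ ^ 2) ^ 4 ≠ 1) := by
  refine ⟨?_, fun σ _ hσ => ?_⟩
  · have harg : ((5 : ℤ) : ℂ) * (Real.pi * Complex.I / 18) =
        ((5 * Real.pi / 18 : ℝ) : ℂ) * Complex.I := by
      push_cast; ring
    have hangle : 2 * Real.pi / 9 = Real.pi / 2 - 5 * Real.pi / 18 := by ring
    rw [Complex.exp_zpow_add_exp_zpow_neg, harg, Complex.cosh_mul_I, hangle,
      Real.sin_pi_div_two_sub]
    push_cast
    rfl
  · have h8 : σ ^ 8 ≠ 1 := by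
      intro h8
      have hsq : (σ + σ⁻¹) ^ 2 = ((4 * Real.sin (2 * Real.pi / 9) ^ 2 : ℝ) : ℂ) := by
        rw [hσ]; push_cast; ring
      have hpos := Real.sin_two_pi_div_nine_pos
      have hlt := Real.sin_two_pi_div_nine_sq_lt_half
      rcases add_inv_sq_eq_zero_or_two_or_four_of_pow_eight_eq_one h8 with h | h | h <;>
        rw [hsq] at h <;> norm_cast at h <;> nlinarith
    exact ⟨h8, by rwa [← pow_mul]⟩
end

section
/- For all real numbers q ≥ 1.6789 and a ≥ 1: a³(q^18+2q^17+4q^16+4q^15+4q^14+5q^13+4q^12+4q^11+2q^10+q^9) + a²(−2q^17−q^16−4q^15−4q^14−5q^13−4q^12−4q^11−4q^10−q^9−2q^8) + a(−2q^10−q^9−4q^8−4q^7−4q^6−5q^5−4q^4−4q^3−q^2−2q) + (q^9+2q^8+4q^7+4q^6+5q^5+4q^4+4q^3+4q^2+2q+1) > 0. -/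
theorem stmt_11 (q a : ℝ) (hq : 1.6789 ≤ q) (ha : 1 ≤ a) :
    0 < a^3 * (q^18 + 2*q^17 + 4*q^16 + 4*q^15 + 4*q^14 + 5*q^13 + 4*q^12 + 4*q^11 + 2*q^10 + q^9)
      + a^2 * (-2*q^17 - q^16 - 4*q^15 - 4*q^14 - 5*q^13 - 4*q^12 - 4*q^11 - 4*q^10 - q^9 - 2*q^8)
      + a * (-2*q^10 - q^9 - 4*q^8 - 4*q^7 - 4*q^6 - 5*q^5 - 4*q^4 - 4*q^3 - q^2 - 2*q)
      + (q^9 + 2*q^8 + 4*q^7 + 4*q^6 + 5*q^5 + 4*q^4 + 4*q^3 + 4*q^2 + 2*q + 1) := by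
  have hq1 : (1:ℝ) ≤ q := by linarith
  have hq0 : (0:ℝ) < q := by linarith
  have ha0 : (0:ℝ) ≤ a - 1 := by linarith
  have ha1 : (0:ℝ) < a := by linarith
  -- q^8 ≥ 35
  have h8 : (35:ℝ) ≤ q^8 := by
    have h := pow_le_pow_left₀ (by norm_num : (0:ℝ) ≤ 1.6789) hq 8
    have : (35:ℝ) ≤ (1.6789:ℝ)^8 := by norm_num
    linarith
  -- powers up to 10 bounded by q^10
  have hp : ∀ k : ℕ, k ≤ 10 → q^k ≤ q^10 := fun k hk => pow_le_pow_right₀ hq1 hk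
  have h1 := hp 1 (by norm_num)
  have h2 := hp 2 (by norm_num)
  have h3 := hp 3 (by norm_num)
  have h4 := hp 4 (by norm_num)
  have h5 := hp 5 (by norm_num)
  have h6 := hp 6 (by norm_num)
  have h7 := hp 7 (by norm_num)
  have h8' := hp 8 (by norm_num)
  have h9 := hp 9 (by norm_num)
  have h10pos : (0:ℝ) ≤ q^10 := by positivity
  have h16pos : (0:ℝ) ≤ q^16 := by positivity
  have hB : 35 * q^10 ≤ q^18 := by
    have := mul_le_mul_of_nonneg_right h8 h10pos
    nlinarith
  -- P3 + P2 + P1 ≥ 0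
  have hS1 : 0 ≤ q^18 + 3*q^16 - 4*q^10 - q^9 - 6*q^8 - 4*q^7 - 4*q^6 - 5*q^5
      - 4*q^4 - 4*q^3 - q^2 - 2*q := by linarith
  -- P3 + P2 ≥ 0
  have hS2 : 0 ≤ q^18 + 3*q^16 - 2*q^10 - 2*q^8 := by linarith
  -- P3 > 0
  have hS3 : 0 < q^18 + 2*q^17 + 4*q^16 + 4*q^15 + 4*q^14 + 5*q^13 + 4*q^12 + 4*q^11
      + 2*q^10 + q^9 := by positivity
  -- P0 > 0
  have hS0 : 0 < q^9 + 2*q^8 + 4*q^7 + 4*q^6 + 5*q^5 + 4*q^4 + 4*q^3 + 4*q^2 + 2*q + 1 := by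
    positivity
  have key : a^3 * (q^18 + 2*q^17 + 4*q^16 + 4*q^15 + 4*q^14 + 5*q^13 + 4*q^12 + 4*q^11 + 2*q^10 + q^9)
      + a^2 * (-2*q^17 - q^16 - 4*q^15 - 4*q^14 - 5*q^13 - 4*q^12 - 4*q^11 - 4*q^10 - q^9 - 2*q^8)
      + a * (-2*q^10 - q^9 - 4*q^8 - 4*q^7 - 4*q^6 - 5*q^5 - 4*q^4 - 4*q^3 - q^2 - 2*q)
      + (q^9 + 2*q^8 + 4*q^7 + 4*q^6 + 5*q^5 + 4*q^4 + 4*q^3 + 4*q^2 + 2*q + 1)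
    = a^2 * (a - 1) * (q^18 + 2*q^17 + 4*q^16 + 4*q^15 + 4*q^14 + 5*q^13 + 4*q^12 + 4*q^11 + 2*q^10 + q^9)
      + a * (a - 1) * (q^18 + 3*q^16 - 2*q^10 - 2*q^8)
      + (a - 1) * (q^18 + 3*q^16 - 4*q^10 - q^9 - 6*q^8 - 4*q^7 - 4*q^6 - 5*q^5 - 4*q^4 - 4*q^3 - q^2 - 2*q)
      + ((q^18 + 3*q^16 - 4*q^10 - q^9 - 6*q^8 - 4*q^7 - 4*q^6 - 5*q^5 - 4*q^4 - 4*q^3 - q^2 - 2*q)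
         + (q^9 + 2*q^8 + 4*q^7 + 4*q^6 + 5*q^5 + 4*q^4 + 4*q^3 + 4*q^2 + 2*q + 1)) := by ring
  rw [key]
  have t1 : 0 ≤ a^2 * (a - 1) * (q^18 + 2*q^17 + 4*q^16 + 4*q^15 + 4*q^14 + 5*q^13 + 4*q^12 + 4*q^11 + 2*q^10 + q^9) := by positivity
  have t2 : 0 ≤ a * (a - 1) * (q^18 + 3*q^16 - 2*q^10 - 2*q^8) := by
    apply mul_nonneg (mul_nonneg (le_of_lt ha1) ha0) hS2
  have t3 : 0 ≤ (a - 1) * (q^18 + 3*q^16 - 4*q^10 - q^9 - 6*q^8 - 4*q^7 - 4*q^6 - 5*q^5 - 4*q^4 - 4*q^3 - q^2 - 2*q) := mul_nonneg ha0 hS1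
  linarith
end

section
/- For all real numbers q ≥ 1.6789 and b ≥ 1: b³(q^24−2q^23+4q^22−4q^21+4q^20−5q^19+4q^18−4q^17+2q^16−q^15) + b²(−2q^21+q^20−4q^19+4q^18−5q^17+4q^16−4q^15+4q^14−q^13+2q^12) + b(−2q^12+q^11−4q^10+4q^9−4q^8+5q^7−4q^6+4q^5−q^4+2q^3) + (q^9−2q^8+4q^7−4q^6+5q^5−4q^4+4q^3−4q^2+2q−1) > 0. -/
/-!
Write the expression as `b³A₃ + b²A₂ + bA₁ + A₀`. Since `b ≥ 1`, it equals the nonnegative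
combination `(b-1)b²·A₃ + (b-1)b·(A₃+A₂) + (b-1)·(A₃+A₂+A₁) + (A₃+A₂+A₁+A₀)`, so it suffices that
the partial sums `A₃`, `A₃+A₂`, `A₃+A₂+A₁`, `A₃+A₂+A₁+A₀` are positive for
`q ≥ 1.6789`. Expanded in powers of `q - 1.6789`, each of them has nonnegative coefficients and a
positive constant term.
-/

theorem cubic_pos_of_partial_sums {R : Type*} [CommRing R] [LinearOrder R] [IsStrictOrderedRing R]
    {x a b c d : R} (hx : 1 ≤ x) (ha : 0 ≤ a) (hab : 0 ≤ a + b) (habc : 0 ≤ a + b + c)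
    (habcd : 0 < a + b + c + d) : 0 < x ^ 3 * a + x ^ 2 * b + x * c + d := by
  have hx₁ : 0 ≤ x - 1 := sub_nonneg.2 hx
  have hx₀ : 0 ≤ x := zero_le_one.trans hx
  have hsplit : x ^ 3 * a + x ^ 2 * b + x * c + d
      = (x - 1) * x ^ 2 * a + (x - 1) * x * (a + b) + (x - 1) * (a + b + c) + (a + b + c + d) := by
    ring
  rw [hsplit]
  have := mul_nonneg (mul_nonneg hx₁ (sq_nonneg x)) ha
  have := mul_nonneg (mul_nonneg hx₁ hx₀) hab
  have := mul_nonneg hx₁ habc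
  linarith

def A₃ (q : ℝ) : ℝ :=
  q^24 - 2*q^23 + 4*q^22 - 4*q^21 + 4*q^20 - 5*q^19 + 4*q^18 - 4*q^17 + 2*q^16 - q^15

def A₂ (q : ℝ) : ℝ :=
  -2*q^21 + q^20 - 4*q^19 + 4*q^18 - 5*q^17 + 4*q^16 - 4*q^15 + 4*q^14 - q^13 + 2*q^12

def A₁ (q : ℝ) : ℝ :=
  -2*q^12 + q^11 - 4*q^10 + 4*q^9 - 4*q^8 + 5*q^7 - 4*q^6 + 4*q^5 - q^4 + 2*q^3

def A₀ (q : ℝ) : ℝ :=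
  q^9 - 2*q^8 + 4*q^7 - 4*q^6 + 5*q^5 - 4*q^4 + 4*q^3 - 4*q^2 + 2*q - 1

theorem partial_sums_pos {q : ℝ} (hq : 1.6789 ≤ q) :
    0 < A₃ q ∧ 0 < A₃ q + A₂ q ∧ 0 < A₃ q + A₂ q + A₁ q ∧ 0 < A₃ q + A₂ q + A₁ q + A₀ q := by
  have ht := fun k : ℕ => pow_nonneg (sub_nonneg.2 hq) k
  unfold A₃ A₂ A₁ A₀
  refine ⟨?_, ?_, ?_, ?_⟩ <;>
    linarith [ht 1, ht 2, ht 3, ht 4, ht 5, ht 6, ht 7, ht 8, ht 9, ht 10, ht 11, ht 12,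
      ht 13, ht 14, ht 15, ht 16, ht 17, ht 18, ht 19, ht 20, ht 21, ht 22, ht 23, ht 24]

theorem stmt_12 (q b : ℝ) (hq : 1.6789 ≤ q) (hb : 1 ≤ b) :
    0 < b^3 * (q^24 - 2*q^23 + 4*q^22 - 4*q^21 + 4*q^20 - 5*q^19 + 4*q^18 - 4*q^17 + 2*q^16 - q^15)
      + b^2 * (-2*q^21 + q^20 - 4*q^19 + 4*q^18 - 5*q^17 + 4*q^16 - 4*q^15 + 4*q^14 - q^13 + 2*q^12)
      + b * (-2*q^12 + q^11 - 4*q^10 + 4*q^9 - 4*q^8 + 5*q^7 - 4*q^6 + 4*q^5 - q^4 + 2*q^3)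
      + (q^9 - 2*q^8 + 4*q^7 - 4*q^6 + 5*q^5 - 4*q^4 + 4*q^3 - 4*q^2 + 2*q - 1) := by
  obtain ⟨h₃, h₃₂, h₃₂₁, h₃₂₁₀⟩ := partial_sums_pos hq
  exact cubic_pos_of_partial_sums (a := A₃ q) (b := A₂ q) (c := A₁ q) (d := A₀ q)
    hb h₃.le h₃₂.le h₃₂₁.le h₃₂₁₀
end

section
/- Let q > 1 be real and n ≥ 1 a natural number; write a = qⁿ and [m]_q = (q^m − q^{−m})/(q − q^{−1}). Define r = (q²+1)(q^{2n+8}+3q^{2n+10}+2q^{2n+12}+2q^{2n+14}−q^6−3q^4−2q^2−2)/(2q^{2n+8}+4q^{2n+10}+4q^{2n+12}+4q^{2n+14}+q^{2n+16}−2q^8−4q^6−4q^4−4q^2−1). Define g = a³(q^18+2q^17+4q^16+4q^15+4q^14+5q^13+4q^12+4q^11+2q^10+q^9) + a²(−2q^17−q^16−4q^15−4q^14−5q^13−4q^12−4q^11−4q^10−q^9−2q^8) + a(−2q^10−q^9−4q^8−4q^7−4q^6−5q^5−4q^4−4q^3−q^2−2q) + (q^9+2q^8+4q^7+4q^6+5q^5+4q^4+4q^3+4q^2+2q+1);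 define h = a³(q^18−2q^17+4q^16−4q^15+4q^14−5q^13+4q^12−4q^11+2q^10−q^9) + a²(−2q^17+q^16−4q^15+4q^14−5q^13+4q^12−4q^11+4q^10−q^9+2q^8) + a(−2q^10+q^9−4q^8+4q^7−4q^6+5q^5−4q^4+4q^3−q^2+2q) + (q^9−2q^8+4q^7−4q^6+5q^5−4q^4+4q^3−4q^2+2q−1); and define k = −q^{n+1}(q−1)(q+1)(q²+1)(a²(2q^14+2q^12+3q^10+q^8)−q^6−3q^4−2q^2−2)(a²(q^16+4q^14+4q^12+4q^10+2q^8)−2q^8−4q^6−4q^4−4q^2−1). Then r·[n]_q − [n+2]_q/r + 2 = g·h/k. -/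
/-!
With `a = q ^ n` one has `[n]_q = q (a² - 1) / (a (q² - 1))`, `[n+2]_q = q (a² q⁴ - 1) / (a q² (q² - 1))`
and `q ^ (2n + c) = a² q ^ c`, so both sides are rational functions of `a` and `q`. The numerator
and denominator of `r` are (up to the factor `q² + 1`) the last two factors `N`, `D` of `k`; they
are positive because each negative monomial `-c q ^ j` is dominated by a monomial `c a² q ^ i` with
`j ≤ i`. After clearing denominators the identity is a polynomial identity in `a, q, N, D`.
-/

/-- The quantum integer `[m]_q = (q^m - q^{-m})/(q - q^{-1})`. -/
noncomputable def qint (q : ℝ) (m : ℕ) : ℝ :=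
  (q ^ (m : ℤ) - q ^ (-(m : ℤ))) / (q - q⁻¹)

theorem qint_eq_div {q : ℝ} (hq : q ≠ 0) (m : ℕ) :
    qint q m = q * ((q ^ m) ^ 2 - 1) / (q ^ m * (q ^ 2 - 1)) := by
  have hqm : q ^ m ≠ 0 := pow_ne_zero m hq
  have hden : q - q⁻¹ = (q ^ 2 - 1) / q := by field_simp
  have hnum : q ^ m - (q ^ m)⁻¹ = ((q ^ m) ^ 2 - 1) / q ^ m := by field_simp
  rw [qint, zpow_neg, zpow_natCast, hden, hnum, div_div_eq_mul_div, div_mul_eq_mul_div,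
    div_div, mul_comm _ q]

theorem pow_lt_mul_pow {R : Type*} [CommSemiring R] [LinearOrder R] [IsStrictOrderedRing R]
    {q b : R} (hq : 1 < q) (hb : 1 ≤ b) {i j : ℕ} (hij : j < i) : q ^ j < b * q ^ i :=
  (pow_lt_pow_right₀ hq hij).trans_le (le_mul_of_one_le_left (by positivity) hb)

theorem branchFactor_num_pos {q b : ℝ} (hq : 1 < q) (hb : 1 ≤ b) :
    0 < b * (2*q^14 + 2*q^12 + 3*q^10 + q^8) - q^6 - 3*q^4 - 2*q^2 - 2 := by
  linarith [pow_lt_mul_pow hq hb (show 0 < 14 by norm_num),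
    pow_lt_mul_pow hq hb (show 2 < 12 by norm_num),
    pow_lt_mul_pow hq hb (show 4 < 10 by norm_num),
    pow_lt_mul_pow hq hb (show 6 < 8 by norm_num)]

theorem branchFactor_den_pos {q b : ℝ} (hq : 1 < q) (hb : 1 ≤ b) :
    0 < b * (q^16 + 4*q^14 + 4*q^12 + 4*q^10 + 2*q^8) - 2*q^8 - 4*q^6 - 4*q^4 - 4*q^2 - 1 := by
  linarith [pow_lt_mul_pow hq hb (show 0 < 16 by norm_num),
    pow_lt_mul_pow hq hb (show 2 < 14 by norm_num),
    pow_lt_mul_pow hq hb (show 4 < 12 by norm_num),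
    pow_lt_mul_pow hq hb (show 6 < 10 by norm_num),
    le_mul_of_one_le_left (by positivity : (0 : ℝ) ≤ q ^ 8) hb]

theorem stmt_14_general (q : ℝ) (hq : 1 < q) (n : ℕ) 
    (a r g h k : ℝ)
    (ha : a = q ^ n)
    (hr : r = (q^2 + 1) *
        (q^(2*n+8) + 3*q^(2*n+10) + 2*q^(2*n+12) + 2*q^(2*n+14) - q^6 - 3*q^4 - 2*q^2 - 2) /
      (2*q^(2*n+8) + 4*q^(2*n+10) + 4*q^(2*n+12) + 4*q^(2*n+14) + q^(2*n+16)
        - 2*q^8 - 4*q^6 - 4*q^4 - 4*q^2 - 1))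
    (hg : g = a^3 * (q^18 + 2*q^17 + 4*q^16 + 4*q^15 + 4*q^14 + 5*q^13 + 4*q^12 + 4*q^11 + 2*q^10 + q^9)
      + a^2 * (-2*q^17 - q^16 - 4*q^15 - 4*q^14 - 5*q^13 - 4*q^12 - 4*q^11 - 4*q^10 - q^9 - 2*q^8)
      + a * (-2*q^10 - q^9 - 4*q^8 - 4*q^7 - 4*q^6 - 5*q^5 - 4*q^4 - 4*q^3 - q^2 - 2*q)
      + (q^9 + 2*q^8 + 4*q^7 + 4*q^6 + 5*q^5 + 4*q^4 + 4*q^3 + 4*q^2 + 2*q + 1))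
    (hh : h = a^3 * (q^18 - 2*q^17 + 4*q^16 - 4*q^15 + 4*q^14 - 5*q^13 + 4*q^12 - 4*q^11 + 2*q^10 - q^9)
      + a^2 * (-2*q^17 + q^16 - 4*q^15 + 4*q^14 - 5*q^13 + 4*q^12 - 4*q^11 + 4*q^10 - q^9 + 2*q^8)
      + a * (-2*q^10 + q^9 - 4*q^8 + 4*q^7 - 4*q^6 + 5*q^5 - 4*q^4 + 4*q^3 - q^2 + 2*q)
      + (q^9 - 2*q^8 + 4*q^7 - 4*q^6 + 5*q^5 - 4*q^4 + 4*q^3 - 4*q^2 + 2*q - 1))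
    (hk : k = -q^(n+1) * (q - 1) * (q + 1) * (q^2 + 1) *
      (a^2 * (2*q^14 + 2*q^12 + 3*q^10 + q^8) - q^6 - 3*q^4 - 2*q^2 - 2) *
      (a^2 * (q^16 + 4*q^14 + 4*q^12 + 4*q^10 + 2*q^8) - 2*q^8 - 4*q^6 - 4*q^4 - 4*q^2 - 1)) :
    r * qint q n - qint q (n + 2) / r + 2 = g * h / k := by
  have hq0 : q ≠ 0 := by positivity
  have hqm1 : q - 1 ≠ 0 := by linarith
  have hqp1 : q + 1 ≠ 0 := by linarith
  have hq2 : q ^ 2 - 1 ≠ 0 := by nlinarith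
  have ha0 : a ≠ 0 := ha ▸ pow_ne_zero n hq0
  have ha2 : 1 ≤ a ^ 2 := one_le_pow₀ (ha ▸ one_le_pow₀ hq.le)
  have hr' : r = (q^2 + 1) * (a^2 * (2*q^14 + 2*q^12 + 3*q^10 + q^8) - q^6 - 3*q^4 - 2*q^2 - 2) /
      (a^2 * (q^16 + 4*q^14 + 4*q^12 + 4*q^10 + 2*q^8) - 2*q^8 - 4*q^6 - 4*q^4 - 4*q^2 - 1) := by
    simp only [hr, pow_add, pow_mul', ← ha]
    ring
  have hqn2 : q ^ (n + 2) = a * q ^ 2 := by rw [pow_add, ha]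
  rw [qint_eq_div hq0, qint_eq_div hq0, ← ha, hqn2, hr', hg, hh, hk, pow_succ q n, ← ha]
  -- as atoms, the factors `N` and `D` are recognised by `field_simp` as nonzero
  generalize hN : a^2 * (2*q^14 + 2*q^12 + 3*q^10 + q^8) - q^6 - 3*q^4 - 2*q^2 - 2 = N
  generalize hD : a^2 * (q^16 + 4*q^14 + 4*q^12 + 4*q^10 + 2*q^8) - 2*q^8 - 4*q^6 - 4*q^4
    - 4*q^2 - 1 = D
  have hN0 : N ≠ 0 := hN ▸ (branchFactor_num_pos hq ha2).ne'
  have hD0 : D ≠ 0 := hD ▸ (branchFactor_den_pos hq ha2).ne'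
  field_simp
  subst hN hD
  ring

theorem stmt_14 (q : ℝ) (hq : 1 < q) (n : ℕ) (hn : 1 ≤ n)
    (a r g h k : ℝ)
    (ha : a = q ^ n)
    (hr : r = (q^2 + 1) *
        (q^(2*n+8) + 3*q^(2*n+10) + 2*q^(2*n+12) + 2*q^(2*n+14) - q^6 - 3*q^4 - 2*q^2 - 2) /
      (2*q^(2*n+8) + 4*q^(2*n+10) + 4*q^(2*n+12) + 4*q^(2*n+14) + q^(2*n+16)
        - 2*q^8 - 4*q^6 - 4*q^4 - 4*q^2 - 1))
    (hg : g = a^3 * (q^18 + 2*q^17 + 4*q^16 + 4*q^15 + 4*q^14 + 5*q^13 + 4*q^12 + 4*q^11 + 2*q^10 + q^9)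
      + a^2 * (-2*q^17 - q^16 - 4*q^15 - 4*q^14 - 5*q^13 - 4*q^12 - 4*q^11 - 4*q^10 - q^9 - 2*q^8)
      + a * (-2*q^10 - q^9 - 4*q^8 - 4*q^7 - 4*q^6 - 5*q^5 - 4*q^4 - 4*q^3 - q^2 - 2*q)
      + (q^9 + 2*q^8 + 4*q^7 + 4*q^6 + 5*q^5 + 4*q^4 + 4*q^3 + 4*q^2 + 2*q + 1))
    (hh : h = a^3 * (q^18 - 2*q^17 + 4*q^16 - 4*q^15 + 4*q^14 - 5*q^13 + 4*q^12 - 4*q^11 + 2*q^10 - q^9)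
      + a^2 * (-2*q^17 + q^16 - 4*q^15 + 4*q^14 - 5*q^13 + 4*q^12 - 4*q^11 + 4*q^10 - q^9 + 2*q^8)
      + a * (-2*q^10 + q^9 - 4*q^8 + 4*q^7 - 4*q^6 + 5*q^5 - 4*q^4 + 4*q^3 - q^2 + 2*q)
      + (q^9 - 2*q^8 + 4*q^7 - 4*q^6 + 5*q^5 - 4*q^4 + 4*q^3 - 4*q^2 + 2*q - 1))
    (hk : k = -q^(n+1) * (q - 1) * (q + 1) * (q^2 + 1) *
      (a^2 * (2*q^14 + 2*q^12 + 3*q^10 + q^8) - q^6 - 3*q^4 - 2*q^2 - 2) *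
      (a^2 * (q^16 + 4*q^14 + 4*q^12 + 4*q^10 + 2*q^8) - 2*q^8 - 4*q^6 - 4*q^4 - 4*q^2 - 1)) :
    r * qint q n - qint q (n + 2) / r + 2 = g * h / k :=
  stmt_14_general q hq n a r g h k ha hr hg hh hk
end

section
/- Let n ≥ 3 be a natural number and q ≥ 1.6789 a real number; write [m]_q = (q^m − q^{−m})/(q − q^{−1}) and set r = (q²+1)(q^{2n+8}+3q^{2n+10}+2q^{2n+12}+2q^{2n+14}−q^6−3q^4−2q^2−2)/(2q^{2n+8}+4q^{2n+10}+4q^{2n+12}+4q^{2n+14}+q^{2n+16}−2q^8−4q^6−4q^4−4q^2−1). Then r·[n]_q − [n+2]_q/r + 2 < 0. -/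
set_option maxHeartbeats 4000000 in
theorem stmt_15 (n : ℕ) (hn : 3 ≤ n) (q : ℝ) (hq : 1.6789 ≤ q) (r : ℝ)
    (hr : r = (q^2 + 1) *
        (q^(2*n+8) + 3*q^(2*n+10) + 2*q^(2*n+12) + 2*q^(2*n+14) - q^6 - 3*q^4 - 2*q^2 - 2) /
      (2*q^(2*n+8) + 4*q^(2*n+10) + 4*q^(2*n+12) + 4*q^(2*n+14) + q^(2*n+16)
        - 2*q^8 - 4*q^6 - 4*q^4 - 4*q^2 - 1)) :
    r * qint q n - qint q (n + 2) / r + 2 < 0 := by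
  have hq1 : (1:ℝ) < q := lt_of_lt_of_le (by norm_num) hq
  have hq0 : (0:ℝ) < q := lt_trans one_pos hq1
  set t : ℝ := q^2 with ht
  have ht1 : (1:ℝ) < t := by nlinarith
  have ht0 : (0:ℝ) < t := by linarith
  set s : ℝ := q^(2*n) with hs
  have hst : s = t^n := by rw [hs, ht, pow_mul]
  have hs3 : t^3 ≤ s := by rw [hst]; exact pow_le_pow_right₀ ht1.le hn
  -- powers of t
  have htp : ∀ i j : ℕ, i ≤ j → t^i ≤ t^j := fun i j h => pow_le_pow_right₀ ht1.le h
  have ht1p : ∀ j : ℕ, 1 ≤ j → 1 < t^j := fun j h => one_lt_pow₀ ht1 (by omega)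
  -- rewrite r in terms of s and t
  have hr' : r = (t+1) * (s*(t^4 + 3*t^5 + 2*t^6 + 2*t^7) - (t^3 + 3*t^2 + 2*t + 2)) /
      (s*(2*t^4 + 4*t^5 + 4*t^6 + 4*t^7 + t^8) - (2*t^4 + 4*t^3 + 4*t^2 + 4*t + 1)) := by
    rw [hr, ht, hs]; ring
  have hN : 0 < s*(t^4 + 3*t^5 + 2*t^6 + 2*t^7) - (t^3 + 3*t^2 + 2*t + 2) := by
    have h1 : t^3*(t^4 + 3*t^5 + 2*t^6 + 2*t^7) ≤ s*(t^4 + 3*t^5 + 2*t^6 + 2*t^7) :=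
      mul_le_mul_of_nonneg_right hs3 (by positivity)
    nlinarith [htp 3 7 (by norm_num), htp 2 8 (by norm_num), htp 1 9 (by norm_num), ht1p 10 (by norm_num)]
  have hD : 0 < s*(2*t^4 + 4*t^5 + 4*t^6 + 4*t^7 + t^8) - (2*t^4 + 4*t^3 + 4*t^2 + 4*t + 1) := by
    have h1 : t^3*(2*t^4 + 4*t^5 + 4*t^6 + 4*t^7 + t^8) ≤ s*(2*t^4 + 4*t^5 + 4*t^6 + 4*t^7 + t^8) :=
      mul_le_mul_of_nonneg_right hs3 (by positivity)
    nlinarith [htp 4 7 (by norm_num), htp 3 8 (by norm_num), htp 2 9 (by norm_num), htp 1 10 (by norm_num), ht1p 11 (by norm_num)]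
  have hr0 : 0 < r := by rw [hr']; positivity
  -- P and Q
  set P : ℝ := (t+1) * (t^4 + 3*t^5 + 2*t^6 + 2*t^7) * t^3 with hPdef
  set Q : ℝ := (2*t^4 + 4*t^5 + 4*t^6 + 4*t^7 + t^8)*t^3 - (2*t^4 + 4*t^3 + 4*t^2 + 4*t + 1) with hQdef
  have hQ0 : 0 < Q := by
    rw [hQdef]
    nlinarith [htp 4 7 (by norm_num), htp 3 8 (by norm_num), htp 2 9 (by norm_num), htp 1 10 (by norm_num), ht1p 11 (by norm_num)]
  have hP0 : 0 < P := by rw [hPdef]; positivity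
  -- r ≤ P/Q
  have hrP : r ≤ P / Q := by
    rw [hr', div_le_div_iff₀ hD hQ0]
    have f1 : 0 ≤ ((t+1)*((t^4 + 3*t^5 + 2*t^6 + 2*t^7)*(2*t^4 + 4*t^3 + 4*t^2 + 4*t + 1)))*(s - t^3) := by
      have : (0:ℝ) ≤ s - t^3 := by linarith
      positivity
    have f2 : 0 ≤ ((t+1)*(t^3 + 3*t^2 + 2*t + 2))*Q := by positivity
    have hid : P*(s*(2*t^4 + 4*t^5 + 4*t^6 + 4*t^7 + t^8) - (2*t^4 + 4*t^3 + 4*t^2 + 4*t + 1))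
        - ((t+1) * (s*(t^4 + 3*t^5 + 2*t^6 + 2*t^7) - (t^3 + 3*t^2 + 2*t + 2))) * Q
        = ((t+1)*((t^4 + 3*t^5 + 2*t^6 + 2*t^7)*(2*t^4 + 4*t^3 + 4*t^2 + 4*t + 1)))*(s - t^3)
          + ((t+1)*(t^3 + 3*t^2 + 2*t + 2))*Q := by
      rw [hPdef, hQdef]; ring
    linarith
  -- the key polynomial inequality
  have hu : (0:ℝ) ≤ 100000000*t - 281870521 := by nlinarith [hq, hq0]
  have hHpos : 0 < t^2*Q^2 - t*P^2 - 2*P*Q := by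
    have hkeyid : (100000000:ℝ)^24 * (t^2*Q^2 - t*P^2 - 2*P*Q)
        = 4237061245263920856308068138190864880302623940275167400347099892737509966748551130170588319839648169504274480452375034631864434545504847898349676519013211905146275167932183056329059010777361639083874881 + 2515855159747006776582065068118002705990328876113022733018966711280671662022797686013940104757940545487642806362606017356750413425078609832049647349619099988870399943228928198397180624856436827864*(100000000*t - 281870521) + 174114841663310830091598614375748739931626739435165224266727241123651717285267254384057732291267837316846858382900723761418567621446431588993247500066693536765500299250829722883570621740116*(100000000*t - 281870521)^2 + 6020218094840764774043523273911881368026883496843407167971174473887757923400095370907858266359503698786408361814206174502681875633378746660987115429208808125551871011085513244360104*(100000000*t - 281870521)^3 + 133977702080094767314828510359631087974082944548019615143007664955560748959467658928871326214237718459945996126207907718391032875499919844667153404109724749363992712457417026*(100000000*t - 281870521)^4 + 2139426131506475824263088873869541617325895841681078663241119116049356411282130148397119719123724550650538734411759292603898334419692664246997476540247823973022903624*(100000000*t - 281870521)^5 + 26021489935037680738769679722361149526370130832438763211069379013839206942778566734683401938856541931815712849076521005803008130362070802991420409315477236356*(100000000*t - 281870521)^6 + 250159446819496543071678773567944413567411564161556867699408870291409961950262511817445598863801856271040840752654775447459024507978461308337587563064*(100000000*t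 - 281870521)^7 + 1948127375694379464599742157838038936080902351738385808606641860277300495803185318843113356751895481162708421084323769138766345518320034062191*(100000000*t - 281870521)^8 + 12498424509173682563358459042015215361482399373185252861203161200161210817333012667958384596107365180892344008001995582597071095166704*(100000000*t - 281870521)^9 + 66833281627673195517209248122655975263986586083580114418673546147351125459436023476496292752002187621397499342456829983655336*(100000000*t - 281870521)^10 + 300220983949070207845376279354458616010037589758243821022655988275951305292390315868361536126173519777078060966074384*(100000000*t - 281870521)^11 + 1138442712650016270789897601380823656485544885722438573305594731049646528278398346246783137892651587611875996*(100000000*t - 281870521)^12 + 3652658345942238994277849416767583238866863035866527396136782274374658850777401692775170692562967824*(100000000*t - 281870521)^13 + 9915668044295415442032330346708255560608197592958532855888536836057711917781391405504460456*(100000000*t - 281870521)^14 + 22720454039954185060506790619275708855363318312281961763644261021185019683720611824*(100000000*t - 281870521)^15 + 43727037596637208363957983349381579137300765851996803288866083540537898031*(100000000*t - 281870521)^16 + 70123734599896525927759989646260620111477412265871189219537998264*(100000000*t - 281870521)^17 + 92604470607641486587472781249978762778750562023925530116*(100000000*t - 281870521)^18 + 98995734870057046445030155876449585608366088904*(100000000*t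 - 281870521)^19 + 83550282100071454116356706750867607106*(100000000*t - 281870521)^20 + 53595747952640216873631860264*(100000000*t - 281870521)^21 + 24561682201231957716*(100000000*t - 281870521)^22 + 7164892504*(100000000*t - 281870521)^23 + 1*(100000000*t - 281870521)^24 := by
      rw [hPdef, hQdef]; ring
    have h1 : 0 < (100000000:ℝ)^24 * (t^2*Q^2 - t*P^2 - 2*P*Q) := by
      rw [hkeyid]
      refine add_pos_of_pos_of_nonneg ?_ (mul_nonneg (by norm_num) (pow_nonneg hu _))
      refine add_pos_of_pos_of_nonneg ?_ (mul_nonneg (by norm_num) (pow_nonneg hu _))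
      refine add_pos_of_pos_of_nonneg ?_ (mul_nonneg (by norm_num) (pow_nonneg hu _))
      refine add_pos_of_pos_of_nonneg ?_ (mul_nonneg (by norm_num) (pow_nonneg hu _))
      refine add_pos_of_pos_of_nonneg ?_ (mul_nonneg (by norm_num) (pow_nonneg hu _))
      refine add_pos_of_pos_of_nonneg ?_ (mul_nonneg (by norm_num) (pow_nonneg hu _))
      refine add_pos_of_pos_of_nonneg ?_ (mul_nonneg (by norm_num) (pow_nonneg hu _))
      refine add_pos_of_pos_of_nonneg ?_ (mul_nonneg (by norm_num) (pow_nonneg hu _))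
      refine add_pos_of_pos_of_nonneg ?_ (mul_nonneg (by norm_num) (pow_nonneg hu _))
      refine add_pos_of_pos_of_nonneg ?_ (mul_nonneg (by norm_num) (pow_nonneg hu _))
      refine add_pos_of_pos_of_nonneg ?_ (mul_nonneg (by norm_num) (pow_nonneg hu _))
      refine add_pos_of_pos_of_nonneg ?_ (mul_nonneg (by norm_num) (pow_nonneg hu _))
      refine add_pos_of_pos_of_nonneg ?_ (mul_nonneg (by norm_num) (pow_nonneg hu _))
      refine add_pos_of_pos_of_nonneg ?_ (mul_nonneg (by norm_num) (pow_nonneg hu _))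
      refine add_pos_of_pos_of_nonneg ?_ (mul_nonneg (by norm_num) (pow_nonneg hu _))
      refine add_pos_of_pos_of_nonneg ?_ (mul_nonneg (by norm_num) (pow_nonneg hu _))
      refine add_pos_of_pos_of_nonneg ?_ (mul_nonneg (by norm_num) (pow_nonneg hu _))
      refine add_pos_of_pos_of_nonneg ?_ (mul_nonneg (by norm_num) (pow_nonneg hu _))
      refine add_pos_of_pos_of_nonneg ?_ (mul_nonneg (by norm_num) (pow_nonneg hu _))
      refine add_pos_of_pos_of_nonneg ?_ (mul_nonneg (by norm_num) (pow_nonneg hu _))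
      refine add_pos_of_pos_of_nonneg ?_ (mul_nonneg (by norm_num) (pow_nonneg hu _))
      refine add_pos_of_pos_of_nonneg ?_ (mul_nonneg (by norm_num) (pow_nonneg hu _))
      refine add_pos_of_pos_of_nonneg ?_ (mul_nonneg (by norm_num) (pow_nonneg hu _))
      refine add_pos_of_pos_of_nonneg ?_ (mul_nonneg (by norm_num) hu)
      norm_num
    have h3 : (100000000:ℝ)^24 * 0 < (100000000:ℝ)^24 * (t^2*Q^2 - t*P^2 - 2*P*Q) := by
      rwa [mul_zero]
    exact lt_of_mul_lt_mul_left h3 (by positivity)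
  set ρ : ℝ := P / Q with hρdef
  have hρ0 : 0 < ρ := div_pos hP0 hQ0
  have hkey : 0 < t^2 - t*ρ^2 - 2*ρ := by
    have heq : t^2 - t*ρ^2 - 2*ρ = (t^2*Q^2 - t*P^2 - 2*P*Q)/Q^2 := by
      rw [hρdef]; field_simp
    rw [heq]; positivity
  have haux : 0 < t - ρ^2 := by nlinarith [hkey, hρ0, ht0]
  clear_value ρ
  clear * - hn hq hq1 hq0 ht ht1 ht0 hr0 hrP hρ0 hkey haux
  -- quantum integer facts
  have hqint : ∀ m : ℕ, qint q m = (q^m - (q^m)⁻¹) / (q - q⁻¹) := by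
    intro m; rw [qint, zpow_neg, zpow_natCast]
  have hdq : 0 < q - q⁻¹ := by
    have : q⁻¹ < 1 := inv_lt_one_of_one_lt₀ hq1
    linarith
  set y : ℝ := q^n with hy
  have hy0 : 0 < y := by rw [hy]; positivity
  have hy3 : q^3 ≤ y := by rw [hy]; exact pow_le_pow_right₀ hq1.le hn
  have hy1 : 1 < y := by nlinarith [hy3, hq1]
  have hyinv : y⁻¹ ≤ 1 := inv_le_one_of_one_le₀ hy1.le
  have hqq : q^2*q⁻¹ = q := by field_simp
  set In : ℝ := qint q n with hIn
  set In2 : ℝ := qint q (n+2) with hIn2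
  have hInval : In = (y - y⁻¹) / (q - q⁻¹) := by rw [hIn, hqint, hy]
  have hIn2val : In2 = (y*t - y⁻¹*t⁻¹) / (q - q⁻¹) := by
    rw [hIn2, hqint, pow_add, mul_inv, ht, hy]
  have hIn_lb : t ≤ In := by
    rw [hInval, le_div_iff₀ hdq, ht]
    nlinarith [hy3, hyinv, hqq, hq1, inv_pos.2 hy0]
  have hIn0 : 0 < In := by nlinarith [hIn_lb, ht1]
  have hIn2_gt : t*In < In2 := by
    rw [hInval, hIn2val, ← mul_div_assoc]
    have hstep : 0 < y⁻¹*(t - t⁻¹) :=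
      mul_pos (inv_pos.2 hy0) (sub_pos.2 (lt_trans (inv_lt_one_of_one_lt₀ ht1) ht1))
    have hnum : t*(y - y⁻¹) < y*t - y⁻¹*t⁻¹ := by nlinarith [hstep]
    exact div_lt_div_of_pos_right hnum hdq
  -- assemble
  have hr2 : r^2 ≤ ρ^2 := by nlinarith [hrP, hr0]
  have h3' : r^2*In + 2*r ≤ ρ^2*In + 2*ρ :=
    add_le_add (mul_le_mul_of_nonneg_right hr2 hIn0.le) (by linarith)
  have hprod : 0 ≤ In*t - In*ρ^2 - t^2 + t*ρ^2 := by
    have h := mul_nonneg (sub_nonneg.2 (le_trans hIn_lb (le_refl In))) haux.le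
    nlinarith [mul_nonneg (sub_nonneg.2 hIn_lb) haux.le]
  have h2' : ρ^2*In + 2*ρ ≤ t*In := by nlinarith [hprod, hkey]
  have h4' : (r*In + 2)*r < In2 := by nlinarith [h3', h2', hIn2_gt]
  have h5 : r*In + 2 < In2/r := (lt_div_iff₀ hr0).mpr h4'
  linarith
end
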